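/- arXiv:2602.04348 — 4 statements merged into one kernel-verified Lean document; each statement's English description precedes it below -/
import Mathlib

section
/- Let A be an invertible n×n real matrix, b ∈ ℝⁿ, x = A⁻¹b, and let ‖·‖ denote the Euclidean norm on ℝⁿ and also the induced operator 2-norm on matrices. Let 0 ≤ θ < 1 and μ ≥ 0. Suppose a sequence (x_i) satisfies x_{i+1} = x_i + d_i for every i ≥ 0, where for each i there exists a computed residual r_i with ‖r_i − (b − A x_i)‖ ≤ μ and the correction satisfies ‖d_i − A⁻¹ r_i‖ ≤ θ ‖A⁻¹ r_i‖. Then for every i ≥ 0: (a) ‖x_{i+1} − x‖ ≤ θ ‖x_i − x‖ + (1 + θ) ‖A⁻¹‖ μ; and consequently (b) ‖x_i − x‖ ≤ θ^i ‖x_0 − x‖ + ((1 − θ^i)/(1 − θ)) (1 + θ) ‖A⁻¹‖ μ, so that limsup_{i→∞} ‖x_i − x‖ ≤ (1 + θ)/(1 − θ) · ‖A⁻¹‖ μ. -/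
/-! Writing `z = A⁻¹ r` for the exact correction, the new error is `(d - z) + (z - (x - xᵢ))`, and
`z - (x - xᵢ) = A⁻¹ (r - (b - A xᵢ))` has norm at most `‖A⁻¹‖ μ`; since also `‖z‖ ≤ ‖xᵢ - x‖ + ‖A⁻¹‖ μ`,
the error obeys the affine contraction `eᵢ₊₁ ≤ θ eᵢ + (1 + θ) ‖A⁻¹‖ μ`. Unrolling it gives the
geometric bound, whose right-hand side tends to `(1 + θ) ‖A⁻¹‖ μ / (1 - θ)`. -/

open Filter

theorem norm_add_sub_le_of_norm_sub_le_mul {E : Type*} [SeminormedAddCommGroup E]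
    {y d z x : E} {θ : ℝ} (hθ : 0 ≤ θ) (hd : ‖d - z‖ ≤ θ * ‖z‖) :
    ‖y + d - x‖ ≤ θ * ‖y - x‖ + (1 + θ) * ‖z - (x - y)‖ := by
  have hz : ‖z‖ ≤ ‖y - x‖ + ‖z - (x - y)‖ := by
    simpa [norm_sub_rev y x] using norm_le_insert' z (x - y)
  calc ‖y + d - x‖ = ‖(d - z) + (z - (x - y))‖ := by congr 1; abel
    _ ≤ θ * ‖z‖ + ‖z - (x - y)‖ := (norm_add_le _ _).trans (by gcongr)
    _ ≤ θ * (‖y - x‖ + ‖z - (x - y)‖) + ‖z - (x - y)‖ := by gcongr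
    _ = θ * ‖y - x‖ + (1 + θ) * ‖z - (x - y)‖ := by ring

theorem norm_leftInverse_apply_sub_le {𝕜 E F : Type*} [NontriviallyNormedField 𝕜]
    [SeminormedAddCommGroup E] [SeminormedAddCommGroup F] [NormedSpace 𝕜 E] [NormedSpace 𝕜 F]
    {B : E →L[𝕜] F} {C : F →L[𝕜] E} (hCB : Function.LeftInverse C B) {b r : F} {y : E} {μ : ℝ}
    (hr : ‖r - (b - B y)‖ ≤ μ) :
    ‖C r - (C b - y)‖ ≤ ‖C‖ * μ := by
  calc ‖C r - (C b - y)‖ = ‖C (r - (b - B y))‖ := by rw [map_sub, map_sub, hCB]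
    _ ≤ ‖C‖ * μ := C.le_of_opNorm_le_of_le le_rfl hr

theorem le_geom_of_le_mul_add {e : ℕ → ℝ} {θ c : ℝ} (hθ0 : 0 ≤ θ) (hθ1 : θ ≠ 1)
    (he : ∀ i, e (i + 1) ≤ θ * e i + c) (i : ℕ) :
    e i ≤ θ ^ i * e 0 + (1 - θ ^ i) / (1 - θ) * c := by
  induction i with
  | zero => simp
  | succ i ih =>
    have hθ : 1 - θ ≠ 0 := sub_ne_zero.mpr hθ1.symm
    calc e (i + 1) ≤ θ * (θ ^ i * e 0 + (1 - θ ^ i) / (1 - θ) * c) + c := by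
          have := mul_le_mul_of_nonneg_left ih hθ0
          linarith [he i]
      _ = θ ^ (i + 1) * e 0 + (1 - θ ^ (i + 1)) / (1 - θ) * c := by
          field_simp
          ring

theorem limsup_le_div_of_le_mul_add {e : ℕ → ℝ} {θ c : ℝ} (hθ0 : 0 ≤ θ) (hθ1 : θ < 1)
    (he0 : ∀ i, 0 ≤ e i) (he : ∀ i, e (i + 1) ≤ θ * e i + c) :
    limsup e atTop ≤ c / (1 - θ) := by
  have hpow := tendsto_pow_atTop_nhds_zero_of_lt_one hθ0 hθ1
  have hbound : Tendsto (fun i => θ ^ i * e 0 + (1 - θ ^ i) / (1 - θ) * c) atTop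
      (nhds (c / (1 - θ))) := by
    convert (hpow.mul_const (e 0)).add (((tendsto_const_nhds.sub hpow).div_const (1 - θ)).mul_const c)
      using 2
    ring
  calc limsup e atTop ≤ limsup (fun i => θ ^ i * e 0 + (1 - θ ^ i) / (1 - θ) * c) atTop :=
        limsup_le_limsup (Eventually.of_forall (le_geom_of_le_mul_add hθ0 hθ1.ne he))
          (isCoboundedUnder_le_of_le atTop he0) hbound.isBoundedUnder_le
    _ = c / (1 - θ) := hbound.limsup_eq

theorem iterative_refinement_limiting_accuracy_general
    {n : ℕ} (A : Matrix (Fin n) (Fin n) ℝ) (hA : IsUnit A)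
    (b x : EuclideanSpace ℝ (Fin n))
    (hx : x = Matrix.toEuclideanCLM (𝕜 := ℝ) A⁻¹ b)
    (θ μ : ℝ) (hθ0 : 0 ≤ θ) (hθ1 : θ < 1)
    (xseq d r : ℕ → EuclideanSpace ℝ (Fin n))
    (hstep : ∀ i, xseq (i + 1) = xseq i + d i)
    (hr : ∀ i, ‖r i - (b - Matrix.toEuclideanCLM (𝕜 := ℝ) A (xseq i))‖ ≤ μ)
    (hd : ∀ i, ‖d i - Matrix.toEuclideanCLM (𝕜 := ℝ) A⁻¹ (r i)‖ ≤
        θ * ‖Matrix.toEuclideanCLM (𝕜 := ℝ) A⁻¹ (r i)‖) :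
    (∀ i, ‖xseq (i + 1) - x‖ ≤
        θ * ‖xseq i - x‖ + (1 + θ) * ‖Matrix.toEuclideanCLM (𝕜 := ℝ) A⁻¹‖ * μ) ∧
    (∀ i, ‖xseq i - x‖ ≤ θ ^ i * ‖xseq 0 - x‖ +
        ((1 - θ ^ i) / (1 - θ)) * (1 + θ) * ‖Matrix.toEuclideanCLM (𝕜 := ℝ) A⁻¹‖ * μ) ∧
    limsup (fun i => ‖xseq i - x‖) atTop ≤
        ((1 + θ) / (1 - θ)) * ‖Matrix.toEuclideanCLM (𝕜 := ℝ) A⁻¹‖ * μ := by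
  set C := Matrix.toEuclideanCLM (𝕜 := ℝ) A⁻¹
  have hCA : Function.LeftInverse C (Matrix.toEuclideanCLM (𝕜 := ℝ) A) := fun v => by
    rw [← mul_apply_eq_comp, ← map_mul, Matrix.nonsing_inv_mul A
      ((Matrix.isUnit_iff_isUnit_det A).mp hA), map_one, one_apply_eq_self]
  have hcontract : ∀ i, ‖xseq (i + 1) - x‖ ≤ θ * ‖xseq i - x‖ + (1 + θ) * ‖C‖ * μ := by
    intro i
    rw [hstep, mul_assoc]
    refine (norm_add_sub_le_of_norm_sub_le_mul hθ0 (hd i)).trans ?_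
    gcongr
    exact hx ▸ norm_leftInverse_apply_sub_le hCA (hr i)
  refine ⟨hcontract, fun i => ?_, ?_⟩
  · simpa only [mul_assoc] using le_geom_of_le_mul_add (e := fun i => ‖xseq i - x‖) hθ0 hθ1.ne hcontract i
  · calc limsup (fun i => ‖xseq i - x‖) atTop ≤ (1 + θ) * ‖C‖ * μ / (1 - θ) :=
          limsup_le_div_of_le_mul_add hθ0 hθ1 (fun _ => norm_nonneg _) hcontract
      _ = (1 + θ) / (1 - θ) * ‖C‖ * μ := by ring

/-- **Limiting accuracy of mixed precision iterative refinement.**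

Let `A` be an invertible `n × n` real matrix, `b ∈ ℝⁿ`, `x = A⁻¹ b`, with the Euclidean
norm on vectors and the induced operator 2-norm on matrices (realized via
`Matrix.toEuclideanCLM`).  Suppose `x_{i+1} = x_i + d_i` where the computed residual
satisfies `‖r_i − (b − A x_i)‖ ≤ μ` and the correction satisfies
`‖d_i − A⁻¹ r_i‖ ≤ θ ‖A⁻¹ r_i‖` with `0 ≤ θ < 1` and `μ ≥ 0`.  Then
(a) `‖x_{i+1} − x‖ ≤ θ ‖x_i − x‖ + (1 + θ) ‖A⁻¹‖ μ`,
(b) `‖x_i − x‖ ≤ θ^i ‖x_0 − x‖ + ((1 − θ^i)/(1 − θ)) (1 + θ) ‖A⁻¹‖ μ`, and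
(c) `limsup_i ‖x_i − x‖ ≤ ((1 + θ)/(1 − θ)) ‖A⁻¹‖ μ`. -/
theorem iterative_refinement_limiting_accuracy
    {n : ℕ} (A : Matrix (Fin n) (Fin n) ℝ) (hA : IsUnit A)
    (b x : EuclideanSpace ℝ (Fin n))
    (hx : x = Matrix.toEuclideanCLM (𝕜 := ℝ) A⁻¹ b)
    (θ μ : ℝ) (hθ0 : 0 ≤ θ) (hθ1 : θ < 1) (hμ : 0 ≤ μ)
    (xseq d r : ℕ → EuclideanSpace ℝ (Fin n))
    (hstep : ∀ i, xseq (i + 1) = xseq i + d i)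
    (hr : ∀ i, ‖r i - (b - Matrix.toEuclideanCLM (𝕜 := ℝ) A (xseq i))‖ ≤ μ)
    (hd : ∀ i, ‖d i - Matrix.toEuclideanCLM (𝕜 := ℝ) A⁻¹ (r i)‖ ≤
        θ * ‖Matrix.toEuclideanCLM (𝕜 := ℝ) A⁻¹ (r i)‖) :
    (∀ i, ‖xseq (i + 1) - x‖ ≤
        θ * ‖xseq i - x‖ + (1 + θ) * ‖Matrix.toEuclideanCLM (𝕜 := ℝ) A⁻¹‖ * μ) ∧
    (∀ i, ‖xseq i - x‖ ≤ θ ^ i * ‖xseq 0 - x‖ +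
        ((1 - θ ^ i) / (1 - θ)) * (1 + θ) * ‖Matrix.toEuclideanCLM (𝕜 := ℝ) A⁻¹‖ * μ) ∧
    limsup (fun i => ‖xseq i - x‖) atTop ≤
        ((1 + θ) / (1 - θ)) * ‖Matrix.toEuclideanCLM (𝕜 := ℝ) A⁻¹‖ * μ :=
  iterative_refinement_limiting_accuracy_general A hA b x hx θ μ hθ0 hθ1 xseq d r hstep hr hd
end

section
/- Fix n and ℓ ≥ 1, and let H, Ĥ ∈ ℝ^{n×n} with ‖H‖_F > 0. For each level k = 1, …, ℓ let B_k be a finite family of subsets of {1,…,n}×{1,…,n} with |B_k| ≤ 2^k, such that all blocks across all levels are pairwise disjoint. Let u_1, …, u_ℓ ≥ 0 and ξ_1, …, ξ_ℓ ≥ 0. Suppose that: (i) Ĥ agrees with H on every entry not belonging to any block; (ii) for each k and each b ∈ B_k, ‖(Ĥ − H)|_b‖_F ≤ u_k ‖H|_b‖_F; and (iii) for each k and each b ∈ B_k, ‖H|_b‖_F ≤ ξ_k ‖H‖_F. Then ‖Ĥ − H‖_F ≤ (Σ_{k=1}^ℓ 2^k ξ_k² u_k²)^{1/2} ‖H‖_F.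 -/
/-- The Frobenius norm of a square real matrix. -/
noncomputable def frobNorm {n : ℕ} (M : Matrix (Fin n) (Fin n) ℝ) : ℝ :=
  Real.sqrt (∑ i, ∑ j, (M i j) ^ 2)

open Classical in
/-- `restrictTo M s` agrees with `M` on entries whose index pair lies in `s`
and is zero elsewhere. -/
noncomputable def restrictTo {n : ℕ} (M : Matrix (Fin n) (Fin n) ℝ)
    (s : Set (Fin n × Fin n)) : Matrix (Fin n) (Fin n) ℝ :=
  fun i j => if (i, j) ∈ s then M i j else 0

lemma frobNorm_nonneg {n : ℕ} (M : Matrix (Fin n) (Fin n) ℝ) : 0 ≤ frobNorm M :=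
  Real.sqrt_nonneg _

lemma frobNormSq_nonneg {n : ℕ} (M : Matrix (Fin n) (Fin n) ℝ) :
    0 ≤ ∑ i, ∑ j, (M i j) ^ 2 :=
  Finset.sum_nonneg fun _ _ => Finset.sum_nonneg fun _ _ => sq_nonneg _

lemma frobNorm_sq {n : ℕ} (M : Matrix (Fin n) (Fin n) ℝ) :
    frobNorm M ^ 2 = ∑ i, ∑ j, (M i j) ^ 2 :=
  Real.sq_sqrt (frobNormSq_nonneg M)

/-- **Rounding-error part of the global HODLR error bound.**

`H, Ĥ ∈ ℝ^{n×n}` with `‖H‖_F > 0`; for each level `k = 1, …, ℓ`, `B k` is a family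
of at most `2^k` index-pair blocks, all blocks across all levels pairwise disjoint;
`Ĥ` agrees with `H` off all blocks; each level-`k` block satisfies
`‖(Ĥ − H)|_b‖_F ≤ u_k ‖H|_b‖_F` and `‖H|_b‖_F ≤ ξ_k ‖H‖_F`.  Then
`‖Ĥ − H‖_F ≤ (∑_{k=1}^ℓ 2^k ξ_k² u_k²)^{1/2} ‖H‖_F`. -/
theorem hodlr_rounding_error_bound
    {n : ℕ} (ℓ : ℕ) (hℓ : 1 ≤ ℓ)
    (H Hhat : Matrix (Fin n) (Fin n) ℝ) (hH : 0 < frobNorm H)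
    (B : ℕ → Finset (Set (Fin n × Fin n)))
    (hcard : ∀ k ∈ Finset.Icc 1 ℓ, (B k).card ≤ 2 ^ k)
    (hdisj : ∀ k ∈ Finset.Icc 1 ℓ, ∀ k' ∈ Finset.Icc 1 ℓ,
      ∀ b ∈ B k, ∀ b' ∈ B k', (k ≠ k' ∨ b ≠ b') → Disjoint b b')
    (u ξ : ℕ → ℝ)
    (hu : ∀ k ∈ Finset.Icc 1 ℓ, 0 ≤ u k) (hξ : ∀ k ∈ Finset.Icc 1 ℓ, 0 ≤ ξ k)
    (hoff : ∀ i j, (∀ k ∈ Finset.Icc 1 ℓ, ∀ b ∈ B k, (i, j) ∉ b) →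
      Hhat i j = H i j)
    (hblock : ∀ k ∈ Finset.Icc 1 ℓ, ∀ b ∈ B k,
      frobNorm (restrictTo (Hhat - H) b) ≤ u k * frobNorm (restrictTo H b))
    (hxi : ∀ k ∈ Finset.Icc 1 ℓ, ∀ b ∈ B k,
      frobNorm (restrictTo H b) ≤ ξ k * frobNorm H) :
    frobNorm (Hhat - H) ≤
      Real.sqrt (∑ k ∈ Finset.Icc 1 ℓ, 2 ^ k * ξ k ^ 2 * u k ^ 2) * frobNorm H := by
  classical
  set E := Hhat - H with hE
  -- pointwise bound
  have hpt : ∀ i j, (E i j) ^ 2 ≤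
      ∑ k ∈ Finset.Icc 1 ℓ, ∑ b ∈ B k, (restrictTo E b i j) ^ 2 := by
    intro i j
    by_cases hmem : ∃ k ∈ Finset.Icc 1 ℓ, ∃ b ∈ B k, (i, j) ∈ b
    · obtain ⟨k0, hk0, b0, hb0, hij⟩ := hmem
      have h1 : (E i j) ^ 2 ≤ ∑ b ∈ B k0, (restrictTo E b i j) ^ 2 := by
        have := Finset.single_le_sum (f := fun b => (restrictTo E b i j) ^ 2)
          (fun b _ => sq_nonneg _) hb0
        simpa [restrictTo, hij] using this
      refine h1.trans ?_
      exact Finset.single_le_sum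
        (f := fun k => ∑ b ∈ B k, (restrictTo E b i j) ^ 2)
        (fun k _ => Finset.sum_nonneg fun b _ => sq_nonneg _) hk0
    · push_neg at hmem
      have : E i j = 0 := by
        simp [hE, Matrix.sub_apply, hoff i j hmem]
      rw [this]
      simpa using Finset.sum_nonneg
        (fun k _ => Finset.sum_nonneg fun (b : Set (Fin n × Fin n)) _ => sq_nonneg (restrictTo E b i j))
  -- sum over all entries
  have hsum : ∑ i, ∑ j, (E i j) ^ 2 ≤
      ∑ k ∈ Finset.Icc 1 ℓ, ∑ b ∈ B k, ∑ i, ∑ j, (restrictTo E b i j) ^ 2 := by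
    have : ∑ i, ∑ j, (E i j) ^ 2 ≤
        ∑ i, ∑ j, ∑ k ∈ Finset.Icc 1 ℓ, ∑ b ∈ B k, (restrictTo E b i j) ^ 2 :=
      Finset.sum_le_sum fun i _ => Finset.sum_le_sum fun j _ => hpt i j
    refine this.trans_eq ?_
    calc ∑ i, ∑ j, ∑ k ∈ Finset.Icc 1 ℓ, ∑ b ∈ B k, (restrictTo E b i j) ^ 2
        = ∑ i, ∑ k ∈ Finset.Icc 1 ℓ, ∑ b ∈ B k, ∑ j, (restrictTo E b i j) ^ 2 := by
          refine Finset.sum_congr rfl fun i _ => ?_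
          calc (∑ j, ∑ k ∈ Finset.Icc 1 ℓ, ∑ b ∈ B k, (restrictTo E b i j) ^ 2)
              = ∑ k ∈ Finset.Icc 1 ℓ, ∑ j, ∑ b ∈ B k, (restrictTo E b i j) ^ 2 :=
                Finset.sum_comm
            _ = ∑ k ∈ Finset.Icc 1 ℓ, ∑ b ∈ B k, ∑ j, (restrictTo E b i j) ^ 2 :=
                Finset.sum_congr rfl fun k _ => Finset.sum_comm
      _ = ∑ k ∈ Finset.Icc 1 ℓ, ∑ i, ∑ b ∈ B k, ∑ j, (restrictTo E b i j) ^ 2 :=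
          Finset.sum_comm
      _ = ∑ k ∈ Finset.Icc 1 ℓ, ∑ b ∈ B k, ∑ i, ∑ j, (restrictTo E b i j) ^ 2 :=
          Finset.sum_congr rfl fun k _ => Finset.sum_comm
  -- per-block bound
  have hblk : ∀ k ∈ Finset.Icc 1 ℓ, ∀ b ∈ B k,
      ∑ i, ∑ j, (restrictTo E b i j) ^ 2 ≤ (ξ k * u k * frobNorm H) ^ 2 := by
    intro k hk b hb
    have h1 : frobNorm (restrictTo E b) ≤ u k * (ξ k * frobNorm H) := by
      refine (hblock k hk b hb).trans ?_
      exact mul_le_mul_of_nonneg_left (hxi k hk b hb) (hu k hk)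
    have h2 : frobNorm (restrictTo E b) ^ 2 ≤ (u k * (ξ k * frobNorm H)) ^ 2 :=
      pow_le_pow_left₀ (frobNorm_nonneg _) h1 2
    rw [frobNorm_sq] at h2
    calc ∑ i, ∑ j, (restrictTo E b i j) ^ 2 ≤ (u k * (ξ k * frobNorm H)) ^ 2 := h2
      _ = (ξ k * u k * frobNorm H) ^ 2 := by ring
  -- level bound
  have hlev : ∑ k ∈ Finset.Icc 1 ℓ, ∑ b ∈ B k, ∑ i, ∑ j, (restrictTo E b i j) ^ 2 ≤
      (∑ k ∈ Finset.Icc 1 ℓ, 2 ^ k * ξ k ^ 2 * u k ^ 2) * frobNorm H ^ 2 := by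
    rw [Finset.sum_mul]
    refine Finset.sum_le_sum fun k hk => ?_
    have : ∑ b ∈ B k, ∑ i, ∑ j, (restrictTo E b i j) ^ 2 ≤
        (B k).card • ((ξ k * u k * frobNorm H) ^ 2) :=
      Finset.sum_le_card_nsmul _ _ _ (fun b hb => hblk k hk b hb)
    refine this.trans ?_
    rw [nsmul_eq_mul]
    have hc : ((B k).card : ℝ) ≤ (2 : ℝ) ^ k := by
      exact_mod_cast (hcard k hk).trans_eq (by norm_num)
    have hbpos : (0 : ℝ) ≤ (ξ k * u k * frobNorm H) ^ 2 := sq_nonneg _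
    calc ((B k).card : ℝ) * (ξ k * u k * frobNorm H) ^ 2
        ≤ (2 : ℝ) ^ k * (ξ k * u k * frobNorm H) ^ 2 :=
          mul_le_mul_of_nonneg_right hc hbpos
      _ = 2 ^ k * ξ k ^ 2 * u k ^ 2 * frobNorm H ^ 2 := by ring
  have hfinal : ∑ i, ∑ j, (E i j) ^ 2 ≤
      (∑ k ∈ Finset.Icc 1 ℓ, 2 ^ k * ξ k ^ 2 * u k ^ 2) * frobNorm H ^ 2 :=
    hsum.trans hlev
  have : frobNorm E ≤ Real.sqrt
      ((∑ k ∈ Finset.Icc 1 ℓ, 2 ^ k * ξ k ^ 2 * u k ^ 2) * frobNorm H ^ 2) :=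
    Real.sqrt_le_sqrt hfinal
  refine this.trans_eq ?_
  rw [Real.sqrt_mul' _ (sq_nonneg _), Real.sqrt_sq (frobNorm_nonneg H)]
end

section
/- Fix n and ℓ ≥ 1, and let H, Ĥ ∈ ℝ^{n×n} with ‖H‖_F > 0. For each level k = 1, …, ℓ let B_k be a finite family of subsets of {1,…,n}×{1,…,n} with |B_k| ≤ 2^k, such that all blocks across all levels are pairwise disjoint. Let ε ≥ 0, u_1, …, u_ℓ ≥ 0 and ξ_1, …, ξ_ℓ ≥ 0. Suppose that: (i) Ĥ agrees with H on every entry not belonging to any block; (ii) for each k and each b ∈ B_k, ‖(Ĥ − H)|_b‖_F ≤ (ε + u_k(1 + ε)) ‖H|_b‖_F; and (iii) for each k and each b ∈ B_k, ‖H|_b‖_F ≤ ξ_k ‖H‖_F. Then ‖Ĥ − H‖_F ≤ ( (1 + ε) (Σ_{k=1}^ℓ 2^k ξ_k² u_k²)^{1/2} + ε ) ‖H‖_F. -/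
open Classical in
lemma restrictTo_sq {n : ℕ} (M : Matrix (Fin n) (Fin n) ℝ)
    (s : Set (Fin n × Fin n)) (i j : Fin n) :
    (restrictTo M s i j) ^ 2 = if (i, j) ∈ s then (M i j) ^ 2 else 0 := by
  unfold restrictTo
  split <;> simp

/-- Minkowski's inequality for finite sums of squares. -/
lemma sqrt_sum_sq_add_le {ι : Type*} (s : Finset ι) (f g : ι → ℝ) :
    Real.sqrt (∑ i ∈ s, (f i + g i) ^ 2) ≤
      Real.sqrt (∑ i ∈ s, f i ^ 2) + Real.sqrt (∑ i ∈ s, g i ^ 2) := by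
  set A := ∑ i ∈ s, f i ^ 2 with hA
  set Bq := ∑ i ∈ s, g i ^ 2 with hB
  have hA0 : 0 ≤ A := Finset.sum_nonneg fun _ _ => sq_nonneg _
  have hB0 : 0 ≤ Bq := Finset.sum_nonneg fun _ _ => sq_nonneg _
  have key : ∑ i ∈ s, (f i + g i) ^ 2 ≤ (Real.sqrt A + Real.sqrt Bq) ^ 2 := by
    have cs := Real.sum_mul_le_sqrt_mul_sqrt s f g
    have expand : ∑ i ∈ s, (f i + g i) ^ 2
        = A + 2 * (∑ i ∈ s, f i * g i) + Bq := by
      rw [hA, hB, Finset.mul_sum, ← Finset.sum_add_distrib, ← Finset.sum_add_distrib]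
      apply Finset.sum_congr rfl; intro i _; ring
    rw [expand]
    have : (Real.sqrt A + Real.sqrt Bq) ^ 2
        = A + 2 * (Real.sqrt A * Real.sqrt Bq) + Bq := by
      rw [add_sq, Real.sq_sqrt hA0, Real.sq_sqrt hB0]; ring
    rw [this]
    nlinarith [cs]
  calc Real.sqrt (∑ i ∈ s, (f i + g i) ^ 2)
      ≤ Real.sqrt ((Real.sqrt A + Real.sqrt Bq) ^ 2) := Real.sqrt_le_sqrt key
    _ = Real.sqrt A + Real.sqrt Bq := Real.sqrt_sq (by positivity)

/-- **Global approximation error bound for mixed precision HODLR representations.**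

`H, Ĥ ∈ ℝ^{n×n}` with `‖H‖_F > 0`; for each level `k = 1, …, ℓ`, `B k` is a family
of at most `2^k` index-pair blocks, all blocks across all levels pairwise disjoint;
`Ĥ` agrees with `H` off all blocks; each level-`k` block carries a combined
low-rank-plus-rounding relative error `‖(Ĥ − H)|_b‖_F ≤ (ε + u_k (1 + ε)) ‖H|_b‖_F`
and satisfies `‖H|_b‖_F ≤ ξ_k ‖H‖_F`.  Then
`‖Ĥ − H‖_F ≤ ((1 + ε) (∑_{k=1}^ℓ 2^k ξ_k² u_k²)^{1/2} + ε) ‖H‖_F`. -/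
theorem hodlr_global_error_bound
    {n : ℕ} (ℓ : ℕ) (hℓ : 1 ≤ ℓ)
    (H Hhat : Matrix (Fin n) (Fin n) ℝ) (hH : 0 < frobNorm H)
    (B : ℕ → Finset (Set (Fin n × Fin n)))
    (hcard : ∀ k ∈ Finset.Icc 1 ℓ, (B k).card ≤ 2 ^ k)
    (hdisj : ∀ k ∈ Finset.Icc 1 ℓ, ∀ k' ∈ Finset.Icc 1 ℓ,
      ∀ b ∈ B k, ∀ b' ∈ B k', (k ≠ k' ∨ b ≠ b') → Disjoint b b')
    (ε : ℝ) (hε : 0 ≤ ε) (u ξ : ℕ → ℝ)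
    (hu : ∀ k ∈ Finset.Icc 1 ℓ, 0 ≤ u k) (hξ : ∀ k ∈ Finset.Icc 1 ℓ, 0 ≤ ξ k)
    (hoff : ∀ i j, (∀ k ∈ Finset.Icc 1 ℓ, ∀ b ∈ B k, (i, j) ∉ b) →
      Hhat i j = H i j)
    (hblock : ∀ k ∈ Finset.Icc 1 ℓ, ∀ b ∈ B k,
      frobNorm (restrictTo (Hhat - H) b) ≤
        (ε + u k * (1 + ε)) * frobNorm (restrictTo H b))
    (hxi : ∀ k ∈ Finset.Icc 1 ℓ, ∀ b ∈ B k,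
      frobNorm (restrictTo H b) ≤ ξ k * frobNorm H) :
    frobNorm (Hhat - H) ≤
      ((1 + ε) * Real.sqrt (∑ k ∈ Finset.Icc 1 ℓ, 2 ^ k * ξ k ^ 2 * u k ^ 2) + ε) *
        frobNorm H := by
  classical
  set E : Matrix (Fin n) (Fin n) ℝ := Hhat - H with hE
  set T : Finset ((_ : ℕ) × Set (Fin n × Fin n)) :=
    (Finset.Icc 1 ℓ).sigma (fun k => B k) with hT
  -- uniqueness of the block containing a given index pair
  have huniq : ∀ p ∈ T, ∀ q ∈ T, ∀ x : Fin n × Fin n, x ∈ p.2 → x ∈ q.2 → p = q := by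
    rintro ⟨k, b⟩ hp ⟨k', b'⟩ hq x hx hx'
    rw [hT, Finset.mem_sigma] at hp hq
    by_contra hne
    have hkb : k ≠ k' ∨ b ≠ b' := by
      by_contra h
      push_neg at h
      exact hne (by rw [h.1, h.2])
    have := hdisj k hp.1 k' hq.1 b hp.2 b' hq.2 hkb
    exact (Set.disjoint_left.mp this hx) hx'
  -- pointwise: sum of indicators ≤ c
  have hpt : ∀ (i j : Fin n) (c : ℝ), 0 ≤ c →
      (∑ p ∈ T, if (i, j) ∈ p.2 then c else 0) ≤ c := by
    intro i j c hc
    rw [← Finset.sum_filter]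
    have hcard1 : (T.filter (fun p => (i, j) ∈ p.2)).card ≤ 1 := by
      rw [Finset.card_le_one]
      intro p hp q hq
      rw [Finset.mem_filter] at hp hq
      exact huniq p hp.1 q hq.1 (i, j) hp.2 hq.2
    rw [Finset.sum_const, nsmul_eq_mul]
    calc ((T.filter (fun p => (i, j) ∈ p.2)).card : ℝ) * c
        ≤ 1 * c := by
          apply mul_le_mul_of_nonneg_right _ hc
          exact_mod_cast hcard1
      _ = c := one_mul c
  -- abbreviations
  set h : (Σ _ : ℕ, Set (Fin n × Fin n)) → ℝ :=
    fun p => frobNorm (restrictTo H p.2) with hh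
  set e : (Σ _ : ℕ, Set (Fin n × Fin n)) → ℝ :=
    fun p => frobNorm (restrictTo E p.2) with he
  -- Step: ‖E‖² ≤ ∑_p e_p²
  have step1 : frobNorm E ^ 2 ≤ ∑ p ∈ T, e p ^ 2 := by
    rw [frobNorm_sq]
    have : ∀ p, e p ^ 2 = ∑ i, ∑ j, (if (i, j) ∈ p.2 then (E i j) ^ 2 else 0) := by
      intro p
      rw [he]
      simp only
      rw [frobNorm_sq]
      congr 1; ext i; congr 1; ext j; exact restrictTo_sq E p.2 i j
    simp_rw [this]
    have swap : (∑ p ∈ T, ∑ i, ∑ j, (if (i, j) ∈ p.2 then (E i j) ^ 2 else 0))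
        = ∑ i, ∑ j, ∑ p ∈ T, (if (i, j) ∈ p.2 then (E i j) ^ 2 else 0) := by
      rw [Finset.sum_comm]
      exact Finset.sum_congr rfl fun i _ => Finset.sum_comm
    rw [swap]
    apply Finset.sum_le_sum
    intro i _
    apply Finset.sum_le_sum
    intro j _
    by_cases hmem : ∃ p ∈ T, (i, j) ∈ p.2
    · obtain ⟨p, hpT, hpm⟩ := hmem
      have := Finset.single_le_sum (f := fun p => if (i, j) ∈ p.2 then (E i j) ^ 2 else 0)
        (fun q _ => by positivity) hpT
      simpa [hpm] using this
    · push_neg at hmem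
      have : E i j = 0 := by
        rw [hE]
        simp only [Matrix.sub_apply]
        rw [hoff i j, sub_self]
        intro k hk b hb
        exact hmem ⟨k, b⟩ (by rw [hT, Finset.mem_sigma]; exact ⟨hk, hb⟩)
      rw [this]
      simp
  -- Step: e_p ≤ ε h_p + u(1+ε) h_p
  have step2 : ∀ p ∈ T, e p ≤ ε * h p + u p.1 * (1 + ε) * h p := by
    rintro ⟨k, b⟩ hp
    rw [hT, Finset.mem_sigma] at hp
    have := hblock k hp.1 b hp.2
    rw [he, hh]
    simp only
    calc frobNorm (restrictTo E b) ≤ (ε + u k * (1 + ε)) * frobNorm (restrictTo H b) := this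
      _ = ε * frobNorm (restrictTo H b) + u k * (1 + ε) * frobNorm (restrictTo H b) := by ring
  have hh0 : ∀ p, 0 ≤ h p := fun p => frobNorm_nonneg _
  have he0 : ∀ p, 0 ≤ e p := fun p => frobNorm_nonneg _
  -- Step: ∑ h_p² ≤ ‖H‖²
  have step3 : ∑ p ∈ T, h p ^ 2 ≤ frobNorm H ^ 2 := by
    have : ∀ p, h p ^ 2 = ∑ i, ∑ j, (if (i, j) ∈ p.2 then (H i j) ^ 2 else 0) := by
      intro p
      rw [hh]; simp only; rw [frobNorm_sq]
      congr 1; ext i; congr 1; ext j; exact restrictTo_sq H p.2 i j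
    simp_rw [this]
    have swap : (∑ p ∈ T, ∑ i, ∑ j, (if (i, j) ∈ p.2 then (H i j) ^ 2 else 0))
        = ∑ i, ∑ j, ∑ p ∈ T, (if (i, j) ∈ p.2 then (H i j) ^ 2 else 0) := by
      rw [Finset.sum_comm]
      exact Finset.sum_congr rfl fun i _ => Finset.sum_comm
    rw [swap, frobNorm_sq]
    apply Finset.sum_le_sum
    intro i _
    apply Finset.sum_le_sum
    intro j _
    exact hpt i j _ (sq_nonneg _)
  -- now put things together
  have hmain : frobNorm E ≤
      Real.sqrt (∑ p ∈ T, (ε * h p) ^ 2) +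
        Real.sqrt (∑ p ∈ T, (u p.1 * (1 + ε) * h p) ^ 2) := by
    have h1 : frobNorm E ≤ Real.sqrt (∑ p ∈ T, e p ^ 2) := by
      have := Real.sqrt_le_sqrt step1
      rwa [Real.sqrt_sq (frobNorm_nonneg E)] at this
    have h2 : Real.sqrt (∑ p ∈ T, e p ^ 2) ≤
        Real.sqrt (∑ p ∈ T, (ε * h p + u p.1 * (1 + ε) * h p) ^ 2) := by
      apply Real.sqrt_le_sqrt
      apply Finset.sum_le_sum
      intro p hp
      have := step2 p hp
      nlinarith [he0 p, hh0 p]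
    exact h1.trans (h2.trans (sqrt_sum_sq_add_le T _ _))
  -- bound first term
  have hb1 : Real.sqrt (∑ p ∈ T, (ε * h p) ^ 2) ≤ ε * frobNorm H := by
    have : ∑ p ∈ T, (ε * h p) ^ 2 = ε ^ 2 * ∑ p ∈ T, h p ^ 2 := by
      rw [Finset.mul_sum]; apply Finset.sum_congr rfl; intros; ring
    rw [this, Real.sqrt_mul (sq_nonneg ε), Real.sqrt_sq hε]
    apply mul_le_mul_of_nonneg_left _ hε
    have := Real.sqrt_le_sqrt step3
    rwa [Real.sqrt_sq hH.le] at this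
  -- bound second term
  have hb2 : Real.sqrt (∑ p ∈ T, (u p.1 * (1 + ε) * h p) ^ 2) ≤
      (1 + ε) * Real.sqrt (∑ k ∈ Finset.Icc 1 ℓ, 2 ^ k * ξ k ^ 2 * u k ^ 2) * frobNorm H := by
    have hsum : ∑ p ∈ T, (u p.1 * (1 + ε) * h p) ^ 2 ≤
        (1 + ε) ^ 2 * (∑ k ∈ Finset.Icc 1 ℓ, 2 ^ k * ξ k ^ 2 * u k ^ 2) * frobNorm H ^ 2 := by
      have step : ∑ p ∈ T, (u p.1 * (1 + ε) * h p) ^ 2 ≤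
          ∑ p ∈ T, (1 + ε) ^ 2 * (u p.1 ^ 2 * ξ p.1 ^ 2 * frobNorm H ^ 2) := by
        apply Finset.sum_le_sum
        rintro ⟨k, b⟩ hp
        rw [hT, Finset.mem_sigma] at hp
        have hxb := hxi k hp.1 b hp.2
        have hu' := hu k hp.1
        have hξ' := hξ k hp.1
        have hhp : h ⟨k, b⟩ ≤ ξ k * frobNorm H := hxb
        have hhp0 : 0 ≤ h ⟨k, b⟩ := hh0 _
        have h2 : h ⟨k, b⟩ ^ 2 ≤ (ξ k * frobNorm H) ^ 2 := by nlinarith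
        calc (u (⟨k, b⟩ : (_ : ℕ) × Set (Fin n × Fin n)).1 * (1 + ε) * h ⟨k, b⟩) ^ 2
            = (u k * (1 + ε)) ^ 2 * h ⟨k, b⟩ ^ 2 := by ring
          _ ≤ (u k * (1 + ε)) ^ 2 * (ξ k * frobNorm H) ^ 2 :=
              mul_le_mul_of_nonneg_left h2 (sq_nonneg _)
          _ = (1 + ε) ^ 2 * (u (⟨k, b⟩ : (_ : ℕ) × Set (Fin n × Fin n)).1 ^ 2 *
              ξ (⟨k, b⟩ : (_ : ℕ) × Set (Fin n × Fin n)).1 ^ 2 * frobNorm H ^ 2) := by ring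
      calc ∑ p ∈ T, (u p.1 * (1 + ε) * h p) ^ 2
          ≤ ∑ p ∈ T, (1 + ε) ^ 2 * (u p.1 ^ 2 * ξ p.1 ^ 2 * frobNorm H ^ 2) := step
        _ = (1 + ε) ^ 2 * frobNorm H ^ 2 *
            ∑ k ∈ Finset.Icc 1 ℓ, (B k).card * (u k ^ 2 * ξ k ^ 2) := by
            rw [hT, Finset.sum_sigma, Finset.mul_sum]
            apply Finset.sum_congr rfl
            intro k _
            have : (∑ s ∈ B k, (1 + ε) ^ 2 *
                (u (⟨k, s⟩ : (_ : ℕ) × Set (Fin n × Fin n)).1 ^ 2 *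
                 ξ (⟨k, s⟩ : (_ : ℕ) × Set (Fin n × Fin n)).1 ^ 2 * frobNorm H ^ 2))
                = ∑ _s ∈ B k, (1 + ε) ^ 2 * (u k ^ 2 * ξ k ^ 2 * frobNorm H ^ 2) := rfl
            rw [this, Finset.sum_const, nsmul_eq_mul]
            ring
        _ ≤ (1 + ε) ^ 2 * frobNorm H ^ 2 *
            ∑ k ∈ Finset.Icc 1 ℓ, 2 ^ k * (u k ^ 2 * ξ k ^ 2) := by
            apply mul_le_mul_of_nonneg_left _ (by positivity)
            apply Finset.sum_le_sum
            intro k hk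
            apply mul_le_mul_of_nonneg_right _ (by positivity)
            exact_mod_cast hcard k hk
        _ = (1 + ε) ^ 2 * (∑ k ∈ Finset.Icc 1 ℓ, 2 ^ k * ξ k ^ 2 * u k ^ 2) *
            frobNorm H ^ 2 := by
            simp only [Finset.mul_sum, Finset.sum_mul]
            apply Finset.sum_congr rfl
            intros; ring
    have := Real.sqrt_le_sqrt hsum
    refine this.trans (le_of_eq ?_)
    rw [Real.sqrt_mul (by positivity), Real.sqrt_mul (sq_nonneg _),
      Real.sqrt_sq (by positivity : (0:ℝ) ≤ 1 + ε), Real.sqrt_sq hH.le]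
  calc frobNorm E ≤ _ := hmain
    _ ≤ ε * frobNorm H +
        (1 + ε) * Real.sqrt (∑ k ∈ Finset.Icc 1 ℓ, 2 ^ k * ξ k ^ 2 * u k ^ 2) * frobNorm H :=
          add_le_add hb1 hb2
    _ = ((1 + ε) * Real.sqrt (∑ k ∈ Finset.Icc 1 ℓ, 2 ^ k * ξ k ^ 2 * u k ^ 2) + ε) *
        frobNorm H := by ring
end

section
/- Let A be an invertible n×n real matrix, let e_k ∈ ℝⁿ be the k-th standard basis vector, let m ∈ ℝⁿ, and let τ ≥ 0. If the least-squares residual satisfies ‖e_k − A m‖₂ ≤ τ, then ‖ |e_k| + |A| |m| ‖₂ ≤ 1 + ‖ |A| |A⁻¹| ‖₂ (1 + τ), where |·| applied to a vector or matrix denotes the entrywise absolute value, ‖·‖₂ on vectors denotes the Euclidean norm, and ‖·‖₂ on matrices denotes the induced operator 2-norm. -/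
open Matrix

/-- The Euclidean (2-)norm of a vector in `ℝⁿ`. -/
noncomputable def euclNorm {n : ℕ} (v : Fin n → ℝ) : ℝ :=
  Real.sqrt (∑ i, v i ^ 2)

/-- The operator 2-norm of a square real matrix, i.e. the norm of the induced
operator on Euclidean space. -/
noncomputable def opNorm2 {n : ℕ} (M : Matrix (Fin n) (Fin n) ℝ) : ℝ :=
  ‖Matrix.toEuclideanCLM (𝕜 := ℝ) M‖

/-!
Write `r = e_k - A m` for the residual. Then `m = A⁻¹ (e_k - r)`, so entrywise
`|A| |m| ≤ |A| |A⁻¹| (|e_k| + |r|)`. Monotonicity of the Euclidean norm on nonnegative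
vectors and the triangle inequality give
`‖ |e_k| + |A| |m| ‖₂ ≤ 1 + ‖ |A| |A⁻¹| ‖₂ (‖e_k‖₂ + ‖r‖₂) ≤ 1 + ‖ |A| |A⁻¹| ‖₂ (1 + τ)`.
-/

namespace Matrix

variable {ι κ R : Type*} [Fintype κ]

section OrderedSemiring

variable [Semiring R] [PartialOrder R] [IsOrderedRing R]

lemma mulVec_le_mulVec_of_nonneg {M : Matrix ι κ R} (hM : ∀ i j, 0 ≤ M i j) {u v : κ → R}
    (huv : u ≤ v) : M *ᵥ u ≤ M *ᵥ v :=
  fun i => dotProduct_le_dotProduct_of_nonneg_left huv (hM i)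

lemma mulVec_nonneg {M : Matrix ι κ R} (hM : ∀ i j, 0 ≤ M i j) {v : κ → R} (hv : 0 ≤ v) :
    0 ≤ M *ᵥ v :=
  fun i => dotProduct_nonneg_of_nonneg (hM i) hv

end OrderedSemiring

lemma abs_mulVec_le [Ring R] [LinearOrder R] [IsStrictOrderedRing R]
    (M : Matrix ι κ R) (v : κ → R) : |M *ᵥ v| ≤ M.map (|·|) *ᵥ |v| := fun i =>
  calc |∑ j, M i j * v j| ≤ ∑ j, |M i j * v j| := Finset.abs_sum_le_sum_abs _ _
    _ = ∑ j, |M i j| * |v j| := by simp only [abs_mul]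

end Matrix

section EuclNorm

variable {n : ℕ}

lemma euclNorm_eq_norm (v : Fin n → ℝ) : euclNorm v = ‖WithLp.toLp 2 v‖ := by
  simp only [euclNorm, EuclideanSpace.norm_eq, Real.norm_eq_abs, sq_abs]

lemma euclNorm_add_le (u v : Fin n → ℝ) : euclNorm (u + v) ≤ euclNorm u + euclNorm v := by
  simpa only [euclNorm_eq_norm, WithLp.toLp_add] using
    norm_add_le (WithLp.toLp 2 u) (WithLp.toLp 2 v)

lemma euclNorm_abs (v : Fin n → ℝ) : euclNorm |v| = euclNorm v := by
  simp only [euclNorm, Pi.abs_apply, sq_abs]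

lemma euclNorm_single_one (k : Fin n) : euclNorm (Pi.single k 1) = 1 := by
  rw [euclNorm, Finset.sum_eq_single k (fun j _ hj => by simp [hj]) (by simp)]
  simp

lemma euclNorm_le_euclNorm {u v : Fin n → ℝ} (hu : 0 ≤ u) (huv : u ≤ v) :
    euclNorm u ≤ euclNorm v :=
  Real.sqrt_le_sqrt <| Finset.sum_le_sum fun i _ => pow_le_pow_left₀ (hu i) (huv i) 2

lemma euclNorm_mulVec_le (M : Matrix (Fin n) (Fin n) ℝ) (v : Fin n → ℝ) :
    euclNorm (M *ᵥ v) ≤ opNorm2 M * euclNorm v := by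
  simpa only [euclNorm_eq_norm, opNorm2, toEuclideanCLM_toLp] using
    (toEuclideanCLM (𝕜 := ℝ) M).le_opNorm (WithLp.toLp 2 v)

end EuclNorm

theorem spai_apriori_bound_general
    {n : ℕ} (A : Matrix (Fin n) (Fin n) ℝ) (hA : IsUnit A)
    (k : Fin n) (m : Fin n → ℝ) (τ : ℝ)
    (hres : euclNorm (Pi.single k 1 - A *ᵥ m) ≤ τ) :
    euclNorm (fun i => |(Pi.single k 1 : Fin n → ℝ) i| + (A.map (|·|) *ᵥ fun j => |m j|) i) ≤
      1 + opNorm2 (A.map (|·|) * A⁻¹.map (|·|)) * (1 + τ) := by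
  set e : Fin n → ℝ := Pi.single k 1
  set r := e - A *ᵥ m
  set w := |e| + |r|
  have habs : ∀ M : Matrix (Fin n) (Fin n) ℝ, ∀ i j, 0 ≤ M.map (|·|) i j :=
    fun _ _ _ => abs_nonneg _
  have hm : m = A⁻¹ *ᵥ (e - r) := by
    rw [sub_sub_cancel, mulVec_mulVec, nonsing_inv_mul A ((isUnit_iff_isUnit_det A).mp hA),
      one_mulVec]
  have hm_abs : |m| ≤ A⁻¹.map (|·|) *ᵥ w :=
    calc |m| = |A⁻¹ *ᵥ (e - r)| := by rw [← hm]
      _ ≤ A⁻¹.map (|·|) *ᵥ |e - r| := abs_mulVec_le _ _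
      _ ≤ A⁻¹.map (|·|) *ᵥ w := mulVec_le_mulVec_of_nonneg (habs _) fun i => abs_sub (e i) (r i)
  have hw : euclNorm w ≤ 1 + τ :=
    calc euclNorm w ≤ euclNorm |e| + euclNorm |r| := euclNorm_add_le _ _
      _ ≤ 1 + τ := by rw [euclNorm_abs, euclNorm_abs, euclNorm_single_one]; linarith
  calc euclNorm (|e| + A.map (|·|) *ᵥ |m|)
      ≤ euclNorm (|e| + (A.map (|·|) * A⁻¹.map (|·|)) *ᵥ w) := by
        refine euclNorm_le_euclNorm (add_nonneg (abs_nonneg e) ?_) (add_le_add_right ?_ _)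
        · exact mulVec_nonneg (habs A) (abs_nonneg m)
        · rw [← mulVec_mulVec]
          exact mulVec_le_mulVec_of_nonneg (habs A) hm_abs
    _ ≤ euclNorm |e| + opNorm2 (A.map (|·|) * A⁻¹.map (|·|)) * euclNorm w :=
        (euclNorm_add_le _ _).trans (add_le_add_right (euclNorm_mulVec_le _ _) _)
    _ ≤ 1 + opNorm2 (A.map (|·|) * A⁻¹.map (|·|)) * (1 + τ) := by
        rw [euclNorm_abs, euclNorm_single_one]
        gcongr
        exact norm_nonneg _

/-- **A priori bound for the residual-evaluation quantity in sparse approximate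
inverse construction.**

Let `A ∈ ℝ^{n×n}` be invertible, `e_k` the `k`-th standard basis vector, `m ∈ ℝⁿ`,
and `τ ≥ 0`.  If `‖e_k − A m‖₂ ≤ τ`, then
`‖ |e_k| + |A| |m| ‖₂ ≤ 1 + ‖ |A| |A⁻¹| ‖₂ (1 + τ)`,
where `|·|` is the entrywise absolute value and the matrix norm is the operator
2-norm. -/
theorem spai_apriori_bound
    {n : ℕ} (A : Matrix (Fin n) (Fin n) ℝ) (hA : IsUnit A)
    (k : Fin n) (m : Fin n → ℝ) (τ : ℝ) (hτ : 0 ≤ τ)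
    (hres : euclNorm (Pi.single k 1 - A *ᵥ m) ≤ τ) :
    euclNorm (fun i => |(Pi.single k 1 : Fin n → ℝ) i| + (A.map (|·|) *ᵥ fun j => |m j|) i) ≤
      1 + opNorm2 (A.map (|·|) * A⁻¹.map (|·|)) * (1 + τ) :=
  spai_apriori_bound_general A hA k m τ hres
end
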